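/- arXiv:1608.05845 — 5 statements merged into one kernel-verified Lean document; each statement's English description precedes it below -/
import Mathlib

section
/- If a function C : ℝ^L → ℝ satisfies independence (for any s, s', s'', s''' that agree with each other as follows: s'' agrees with s and s''' agrees with s' in all coordinates except ℓ, and s_ℓ = s'_ℓ = a while s''_ℓ = s'''_ℓ = b, then C(s) - C(s') = C(s'') - C(s''')) and C(0) = 0, then there exist functions F_ℓ : ℝ → ℝ with F_ℓ(0) = 0 such that C(s) = ∑_{ℓ=1}^{L} F_ℓ(s_ℓ) for all s. -/
/-- Independence: whenever two vectors agree in coordinate ℓ, changing that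
coordinate in both vectors to a common value `b` leaves the difference of `C` unchanged. -/
def Independence {L : ℕ} (C : (Fin L → ℝ) → ℝ) : Prop :=
  ∀ (s s' : Fin L → ℝ) (ℓ : Fin L) (b : ℝ), s ℓ = s' ℓ →
    C s - C s' = C (Function.update s ℓ b) - C (Function.update s' ℓ b)

theorem stmt_0 {L : ℕ} (hL : 0 < L) (C : (Fin L → ℝ) → ℝ)
    (hInd : Independence C) (h0 : C 0 = 0) :
    ∃ F : Fin L → ℝ → ℝ, (∀ ℓ, F ℓ 0 = 0) ∧
      ∀ s : Fin L → ℝ, C s = ∑ ℓ : Fin L, F ℓ (s ℓ) := by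
  set F : Fin L → ℝ → ℝ := fun ℓ x => C (Function.update 0 ℓ x) with hF
  have step : ∀ (s : Fin L → ℝ) (ℓ : Fin L),
      C s = F ℓ (s ℓ) + C (Function.update s ℓ 0) := by
    intro s ℓ
    have h := hInd s (Function.update 0 ℓ (s ℓ)) ℓ 0 (by simp)
    have hz : Function.update (0:Fin L → ℝ) ℓ 0 = 0 := Function.update_eq_self ℓ (0 : Fin L → ℝ)
    rw [Function.update_idem, hz, h0] at h
    simp only [hF]
    linarith
  have main : ∀ (T : Finset (Fin L)) (s : Fin L → ℝ),
      C s = ∑ ℓ ∈ T, F ℓ (s ℓ) + C (fun i => if i ∈ T then (0:ℝ) else s i) := by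
    intro T
    induction T using Finset.induction with
    | empty => intro s; simp
    | @insert a T ha ih =>
      intro s
      rw [ih s]
      have h2 := step (fun i => if i ∈ T then (0:ℝ) else s i) a
      simp only [ha, if_false] at h2
      rw [h2, Finset.sum_insert ha]
      have : (Function.update (fun i => if i ∈ T then (0:ℝ) else s i) a 0)
          = fun i => if i ∈ insert a T then (0:ℝ) else s i := by
        funext i
        by_cases hi : i = a
        · subst hi; simp
        · simp [Function.update_of_ne hi, hi]
      rw [this]
      ring
  refine ⟨F, fun ℓ => ?_, fun s => ?_⟩
  · simp [hF, Function.update_eq_self_iff.mpr rfl, h0]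
  · have := main Finset.univ s
    simpa [show (fun _ : Fin L => (0:ℝ)) = 0 from rfl, h0] using this
end

section
/- Let c be a symmetric centrality measure that is monotone relative to a symmetric nodal statistic s. Then for any two nodes i, j and graphs g, g' with s_i(g) = s_j(g'), we have c_i(g) = c_j(g'). Consequently there exists a single function 𝒞 on the range of s with c_i(g) = 𝒞(s_i(g)) for all i and g. -/
/-- The relabeled network `g ∘ π`, with `(g∘π)_{ij} = g_{π(i)π(j)}`. -/
def permNet {n : ℕ} (g : Matrix (Fin n) (Fin n) ℝ) (π : Equiv.Perm (Fin n)) :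
    Matrix (Fin n) (Fin n) ℝ :=
  fun i j => g (π i) (π j)

/-- A nodal statistic is symmetric if `s_i(g) = s_{π(i)}(g ∘ π)` for every permutation. -/
def NodalSymmetric {n L : ℕ} (s : Matrix (Fin n) (Fin n) ℝ → Fin n → Fin L → ℝ) : Prop :=
  ∀ (π : Equiv.Perm (Fin n)) (g : Matrix (Fin n) (Fin n) ℝ) (i : Fin n),
    s g i = s (permNet g π) (π i)

/-- A centrality measure is symmetric if `c_i(g) = c_{π(i)}(g ∘ π)`. -/
def CentralitySymmetric {n : ℕ} (c : Matrix (Fin n) (Fin n) ℝ → Fin n → ℝ) : Prop :=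
  ∀ (π : Equiv.Perm (Fin n)) (g : Matrix (Fin n) (Fin n) ℝ) (i : Fin n),
    c g i = c (permNet g π) (π i)

theorem stmt_4 {n L : ℕ} (c : Matrix (Fin n) (Fin n) ℝ → Fin n → ℝ)
    (s : Matrix (Fin n) (Fin n) ℝ → Fin n → Fin L → ℝ)
    (hsSym : NodalSymmetric s) (hcSym : CentralitySymmetric c)
    (hMono : ∀ (g g' : Matrix (Fin n) (Fin n) ℝ) (i : Fin n),
      (∀ ℓ, s g' i ℓ ≤ s g i ℓ) → c g' i ≤ c g i) :
    (∀ (g g' : Matrix (Fin n) (Fin n) ℝ) (i j : Fin n),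
        s g i = s g' j → c g i = c g' j) ∧
    ∃ 𝒞 : (Fin L → ℝ) → ℝ, ∀ (g : Matrix (Fin n) (Fin n) ℝ) (i : Fin n),
        c g i = 𝒞 (s g i) := by
  have main : ∀ (g g' : Matrix (Fin n) (Fin n) ℝ) (i j : Fin n),
      s g i = s g' j → c g i = c g' j := by
    intro g g' i j hs
    set π := Equiv.swap j i with hπ
    have hπj : π j = i := Equiv.swap_apply_left j i
    have hs' : s g' j = s (permNet g' π) i := by
      rw [hsSym π g' j, hπj]
    have hc' : c g' j = c (permNet g' π) i := by
      rw [hcSym π g' j, hπj]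
    have hse : s g i = s (permNet g' π) i := hs.trans hs'
    have h1 : c (permNet g' π) i ≤ c g i := hMono _ _ i (fun ℓ => (congrFun hse ℓ).ge)
    have h2 : c g i ≤ c (permNet g' π) i := hMono _ _ i (fun ℓ => (congrFun hse ℓ).le)
    rw [hc']
    exact le_antisymm h2 h1
  refine ⟨main, ?_⟩
  classical
  refine ⟨fun v => if h : ∃ p : Matrix (Fin n) (Fin n) ℝ × Fin n, s p.1 p.2 = v
      then c h.choose.1 h.choose.2 else 0, ?_⟩
  intro g i
  have h : ∃ p : Matrix (Fin n) (Fin n) ℝ × Fin n, s p.1 p.2 = s g i := ⟨(g, i), rfl⟩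
  show c g i = dite _ _ _
  rw [dif_pos h]
  exact (main _ _ _ _ h.choose_spec).symm
end

section
/- Claim (monotone hierarchy path counts): In a monotone hierarchy with root i_0, for any two nodes i, j with ρ(j) = ρ(i) + 1 (where ρ is distance to the root), and any ℓ ≥ 0, the number of successors of i at distance ℓ from i is at least the number of successors of j at distance ℓ from j: p(i,ℓ) ≥ p(j,ℓ). -/
/-!
Induction on `ℓ`. The successors of `x` at distance `ℓ + 1` are the disjoint union, over the
children `c` of `x`, of the successors of `c` at distance `ℓ`. In a tree every vertex `x` has at
least `deg x - 1` children and a non-root vertex `y` exactly `deg y - 1`, so `deg y ≤ deg x` gives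
`y` no more children than `x`; as each child of `y` lies one level below each child of `x`, the
induction hypothesis bounds every summand for `y` by every summand for `x`.
-/

/-- `j` is a successor of `i` in the tree `g` oriented away from the root `r`:
`i` lies on the (unique) path from the root to `j`. -/
def Succ {n : ℕ} (g : SimpleGraph (Fin n)) (r i j : Fin n) : Prop :=
  i ≠ j ∧ g.dist r j = g.dist r i + g.dist i j

/-- `p g r i ℓ`: the number of successors of `i` at distance `ℓ` from `i`
(counting `i` itself when `ℓ = 0`). -/
noncomputable def succCount {n : ℕ} (g : SimpleGraph (Fin n)) (r i : Fin n) (ℓ : ℕ) : ℕ :=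
  Nat.card {j : Fin n | g.dist i j = ℓ ∧ g.dist r j = g.dist r i + ℓ}

/-- A monotone hierarchy: a rooted tree in which (i) degrees weakly decrease with
depth; (ii)-(iii) degree orderings between same-depth nodes propagate consistently
to their successors; (iv) all leaves are at the same distance `h` from the root. -/
def IsMonotoneHierarchy {n : ℕ} (g : SimpleGraph (Fin n)) [DecidableRel g.Adj]
    (r : Fin n) (h : ℕ) : Prop :=
  g.IsTree ∧
  (∀ i j, g.dist r i < g.dist r j → g.degree j ≤ g.degree i) ∧
  (∀ i j, g.dist r i = g.dist r j → g.degree j < g.degree i →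
    ∀ k l, Succ g r i k → Succ g r j l → g.dist r k = g.dist r l →
      g.degree l ≤ g.degree k) ∧
  (∀ i j, g.dist r i = g.dist r j → g.degree i = g.degree j →
    (∃ k l, Succ g r i k ∧ Succ g r j l ∧ g.dist r k = g.dist r l ∧
      g.degree l < g.degree k) →
    ∀ k l, Succ g r i k → Succ g r j l → g.dist r k = g.dist r l →
      g.degree l ≤ g.degree k) ∧
  (∀ i, g.degree i = 1 → g.dist r i = h)

open Finset

lemma Finset.sum_le_sum_of_card_le_of_forall_le {ι κ : Type*} {s : Finset ι} {t : Finset κ}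
    {f : ι → ℕ} {g : κ → ℕ} (hst : #s ≤ #t) (hfg : ∀ a ∈ s, ∀ b ∈ t, f a ≤ g b) :
    ∑ a ∈ s, f a ≤ ∑ b ∈ t, g b := by
  rcases t.eq_empty_or_nonempty with rfl | ht
  · simp [card_eq_zero.mp (Nat.le_zero.mp hst)]
  obtain ⟨b₀, hb₀, hmin⟩ := t.exists_min_image g ht
  calc ∑ a ∈ s, f a ≤ #s • g b₀ := s.sum_le_card_nsmul f (g b₀) fun a ha => hfg a ha b₀ hb₀
    _ ≤ #t • g b₀ := Nat.mul_le_mul_right _ hst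
    _ ≤ ∑ b ∈ t, g b := t.card_nsmul_le_sum g (g b₀) hmin

namespace SimpleGraph

variable {V : Type*} {G : SimpleGraph V}

lemma exists_adj_dist_eq_of_dist_eq_add_one {u v : V} {ℓ : ℕ} (h : G.dist u v = ℓ + 1) :
    ∃ c, G.Adj u c ∧ G.dist c v = ℓ := by
  obtain ⟨W, hW⟩ :=
    (Reachable.of_dist_ne_zero (by omega : G.dist u v ≠ 0)).exists_walk_length_eq_dist
  cases W with
  | nil => simp at h
  | cons hadj q =>
    refine ⟨_, hadj, le_antisymm ?_ ?_⟩
    · have := dist_le q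
      rw [Walk.length_cons] at hW
      omega
    · have := hadj.reachable.dist_triangle_left v
      rw [dist_eq_one_iff_adj.mpr hadj] at this
      omega

/-- In a tree, a geodesic from `r` to `k` has exactly one vertex at each distance from `r`. -/
lemma IsTree.eq_of_dist_add_dist_eq (hT : G.IsTree) {r x y k : V}
    (hx : G.dist r x + G.dist x k = G.dist r k) (hy : G.dist r y + G.dist y k = G.dist r k)
    (hxy : G.dist r x = G.dist r y) : x = y := by
  have geodesic_through : ∀ z, G.dist r z + G.dist z k = G.dist r k →
      ∃ W : G.Walk r k, W.IsPath ∧ W.getVert (G.dist r z) = z := by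
    intro z hz
    obtain ⟨p, hp⟩ := hT.connected.exists_walk_length_eq_dist r z
    obtain ⟨q, hq⟩ := hT.connected.exists_walk_length_eq_dist z k
    refine ⟨p.append q, (p.append q).isPath_of_length_eq_dist (by simp [hp, hq, hz]), ?_⟩
    rw [Walk.getVert_append', if_pos hp.ge, ← hp, Walk.getVert_length]
  obtain ⟨W, hW, hWx⟩ := geodesic_through x hx
  obtain ⟨W', hW', hW'y⟩ := geodesic_through y hy
  calc x = W.getVert (G.dist r x) := hWx.symm
    _ = W'.getVert (G.dist r y) := by rw [hxy, (hT.existsUnique_path r k).unique hW hW']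
    _ = y := hW'y

variable [Fintype V]

open Classical in
noncomputable def children (G : SimpleGraph V) (r x : V) : Finset V :=
  {c | G.Adj x c ∧ G.dist r c = G.dist r x + 1}

open Classical in
noncomputable def descendantsAt (G : SimpleGraph V) (r x : V) (ℓ : ℕ) : Finset V :=
  {k | G.dist x k = ℓ ∧ G.dist r k = G.dist r x + ℓ}

variable {r x : V}

@[simp]
lemma mem_children {c : V} :
    c ∈ G.children r x ↔ G.Adj x c ∧ G.dist r c = G.dist r x + 1 := by
  simp [children]

@[simp]
lemma mem_descendantsAt {k : V} {ℓ : ℕ} :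
    k ∈ G.descendantsAt r x ℓ ↔ G.dist x k = ℓ ∧ G.dist r k = G.dist r x + ℓ := by
  simp [descendantsAt]

lemma Connected.descendantsAt_zero (hc : G.Connected) : G.descendantsAt r x 0 = {x} := by
  ext k
  simp only [mem_descendantsAt, mem_singleton, add_zero, hc.dist_eq_zero_iff]
  exact ⟨fun h => h.1.symm, fun h => ⟨h.symm, h ▸ rfl⟩⟩

lemma Connected.descendantsAt_succ [DecidableEq V] (hc : G.Connected) (ℓ : ℕ) :
    G.descendantsAt r x (ℓ + 1) = (G.children r x).biUnion (G.descendantsAt r · ℓ) := by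
  ext k
  simp only [mem_descendantsAt, mem_biUnion, mem_children]
  constructor
  · rintro ⟨hxk, hrk⟩
    obtain ⟨c, hadj, hck⟩ := exists_adj_dist_eq_of_dist_eq_add_one hxk
    have hrc := hc.dist_triangle (u := r) (v := x) (w := c)
    have hrk' := hc.dist_triangle (u := r) (v := c) (w := k)
    rw [dist_eq_one_iff_adj.mpr hadj] at hrc
    exact ⟨c, ⟨hadj, by omega⟩, hck, by omega⟩
  · rintro ⟨c, ⟨hadj, hrc⟩, hck, hrk⟩
    have hxk := hc.dist_triangle (u := x) (v := c) (w := k)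
    have hrk' := hc.dist_triangle (u := r) (v := x) (w := k)
    rw [dist_eq_one_iff_adj.mpr hadj] at hxk
    exact ⟨by omega, by omega⟩

lemma IsTree.disjoint_descendantsAt (hT : G.IsTree) {c c' : V}
    (hcc' : G.dist r c = G.dist r c') (hne : c ≠ c') (ℓ : ℕ) :
    Disjoint (G.descendantsAt r c ℓ) (G.descendantsAt r c' ℓ) := by
  refine Finset.disjoint_left.mpr fun k hk hk' => hne ?_
  rw [mem_descendantsAt] at hk hk'
  exact hT.eq_of_dist_add_dist_eq (k := k) (by omega) (by omega) hcc'

lemma IsTree.card_descendantsAt_succ (hT : G.IsTree) (ℓ : ℕ) :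
    #(G.descendantsAt r x (ℓ + 1)) = ∑ c ∈ G.children r x, #(G.descendantsAt r c ℓ) := by
  classical
  rw [hT.connected.descendantsAt_succ, card_biUnion]
  intro c hc c' hc' hne
  rw [mem_coe, mem_children] at hc hc'
  exact hT.disjoint_descendantsAt (by omega) hne ℓ

variable [DecidableRel G.Adj]

lemma Connected.card_children_lt_degree (hc : G.Connected) (hx : x ≠ r) :
    #(G.children r x) < G.degree x := by
  classical
  have hrx : G.dist x r = G.dist r x - 1 + 1 := by
    rw [dist_comm]
    have := hc.pos_dist_of_ne hx.symm
    omega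
  obtain ⟨p, hxp, hpr⟩ := exists_adj_dist_eq_of_dist_eq_add_one hrx
  have hp : p ∉ G.children r x := by
    rw [mem_children, dist_comm]
    omega
  calc #(G.children r x) < #(insert p (G.children r x)) := by
        rw [card_insert_of_notMem hp]
        omega
    _ ≤ #(G.neighborFinset x) := by
        refine card_le_card (insert_subset (G.mem_neighborFinset x p |>.mpr hxp) fun c hc => ?_)
        simpa using (mem_children.mp hc).1
    _ = G.degree x := G.card_neighborFinset_eq_degree x

lemma IsTree.degree_le_card_children_add_one (hT : G.IsTree) (r x : V) :
    G.degree x ≤ #(G.children r x) + 1 := by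
  classical
  have parent_of_notMem : ∀ p ∈ G.neighborFinset x \ G.children r x,
      G.dist r p + G.dist p x = G.dist r x ∧ G.dist p x = 1 := by
    intro p hp
    rw [mem_sdiff, mem_neighborFinset, mem_children] at hp
    obtain ⟨hadj, hnot_child⟩ := hp
    have hnot_deeper : G.dist r p ≠ G.dist r x + 1 := fun h => hnot_child ⟨hadj, h⟩
    have := hT.dist_eq_dist_add_one_of_adj r hadj
    rw [dist_eq_one_iff_adj.mpr hadj.symm]
    omega
  have at_most_one_parent : #(G.neighborFinset x \ G.children r x) ≤ 1 := by
    refine card_le_one.mpr fun p hp p' hp' => ?_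
    obtain ⟨hpx, hp1⟩ := parent_of_notMem p hp
    obtain ⟨hp'x, hp'1⟩ := parent_of_notMem p' hp'
    exact hT.eq_of_dist_add_dist_eq hpx hp'x (by omega)
  calc G.degree x = #(G.neighborFinset x) := (G.card_neighborFinset_eq_degree x).symm
    _ ≤ #(G.neighborFinset x \ G.children r x) + #(G.children r x) :=
        card_le_card_sdiff_add_card
    _ ≤ #(G.children r x) + 1 := by omega

theorem IsTree.card_descendantsAt_le_of_dist_eq_add_one (hT : G.IsTree)
    (hdeg : ∀ x y, G.dist r y = G.dist r x + 1 → G.degree y ≤ G.degree x) (ℓ : ℕ) :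
    ∀ {x y}, G.dist r y = G.dist r x + 1 →
      #(G.descendantsAt r y ℓ) ≤ #(G.descendantsAt r x ℓ) := by
  induction ℓ with
  | zero =>
    intro x y _
    simp [hT.connected.descendantsAt_zero]
  | succ ℓ ih =>
    intro x y hxy
    have hy : y ≠ r := by
      rintro rfl
      simp at hxy
    have hcard : #(G.children r y) ≤ #(G.children r x) := by
      have := hT.connected.card_children_lt_degree hy
      have := hT.degree_le_card_children_add_one r x
      have := hdeg x y hxy
      omega
    rw [hT.card_descendantsAt_succ, hT.card_descendantsAt_succ]
    refine sum_le_sum_of_card_le_of_forall_le hcard fun c hc c' hc' => ih ?_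
    rw [mem_children] at hc hc'
    omega

end SimpleGraph

lemma succCount_eq_card_descendantsAt {n : ℕ} (g : SimpleGraph (Fin n)) (r i : Fin n) (ℓ : ℕ) :
    succCount g r i ℓ = #(g.descendantsAt r i ℓ) := by
  simp [succCount, SimpleGraph.descendantsAt, Nat.card_eq_fintype_card, Fintype.card_subtype]

theorem stmt_12 {n : ℕ} (g : SimpleGraph (Fin n)) [DecidableRel g.Adj]
    (r : Fin n) (h : ℕ) (hMH : IsMonotoneHierarchy g r h)
    (i j : Fin n) (hdepth : g.dist r j = g.dist r i + 1) (ℓ : ℕ) :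
    succCount g r j ℓ ≤ succCount g r i ℓ := by
  obtain ⟨hT, hdeg, -⟩ := hMH
  rw [succCount_eq_card_descendantsAt, succCount_eq_card_descendantsAt]
  exact hT.card_descendantsAt_le_of_dist_eq_add_one (fun x y hxy => hdeg x y (by omega)) ℓ hdepth
end

section
/- In a regular monotone hierarchy, for every walk length L and every depth ℓ, the number of walks of length L emanating from a node at depth ℓ is at least the number of walks of length L emanating from a node at depth ℓ+1: w_ℓ(L) ≥ w_{ℓ+1}(L). -/
/-- In a regular monotone hierarchy of height `h` with level degrees `d`, the walk
counts `w ℓ L` (number of walks of length `L` from a node at depth `ℓ`) satisfy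
`w ℓ L ≥ w (ℓ+1) L` for every depth `ℓ < h` and every length `L`. -/
theorem stmt_13 (h : ℕ) (hh : 1 ≤ h) (d : ℕ → ℕ)
    (hd1 : ∀ ℓ < h, 1 ≤ d ℓ)
    (hdmono : ∀ k ℓ, k ≤ ℓ → ℓ < h → d ℓ ≤ d k)
    (w : ℕ → ℕ → ℕ)
    (hw0 : ∀ ℓ, w ℓ 0 = 1)
    (hwroot : ∀ L, 1 ≤ L → w 0 L = d 0 * w 1 (L - 1))
    (hwmid : ∀ ℓ, 1 ≤ ℓ → ℓ < h → ∀ L, 1 ≤ L →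
      w ℓ L = (d ℓ - 1) * w (ℓ + 1) (L - 1) + w (ℓ - 1) (L - 1))
    (hwleaf : ∀ L, 1 ≤ L → w h L = w (h - 1) (L - 1)) :
    ∀ L : ℕ, ∀ ℓ < h, w (ℓ + 1) L ≤ w ℓ L := by
  have hd0 : 1 ≤ d 0 := hd1 0 hh
  -- growth bound: one more step multiplies counts by at most d 0
  have T : ∀ L, ∀ ℓ, ℓ ≤ h → w ℓ (L + 1) ≤ d 0 * w ℓ L := by
    intro L
    induction L with
    | zero =>
      intro ℓ hℓ
      rw [hw0]
      rcases eq_or_lt_of_le hℓ with heq | hlt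
      · subst heq
        rw [hwleaf 1 le_rfl]
        simp [hw0]
        omega
      · rcases Nat.eq_zero_or_pos ℓ with h0 | h0
        · subst h0
          rw [hwroot 1 le_rfl]
          simp [hw0]
        · rw [hwmid ℓ h0 hlt 1 le_rfl]
          simp [hw0]
          have h1 := hd1 ℓ hlt
          have h2 := hdmono 0 ℓ (Nat.zero_le _) hlt
          omega
    | succ L ih =>
      intro ℓ hℓ
      rcases eq_or_lt_of_le hℓ with heq | hlt
      · subst heq
        rw [hwleaf (L + 2) (by omega), hwleaf (L + 1) (by omega)]
        simp only [Nat.add_sub_cancel]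
        exact ih (ℓ - 1) (by omega)
      · rcases Nat.eq_zero_or_pos ℓ with h0 | h0
        · subst h0
          rw [hwroot (L + 2) (by omega), hwroot (L + 1) (by omega)]
          simp only [Nat.add_sub_cancel]
          exact Nat.mul_le_mul_left _ (ih 1 (by omega))
        · rw [hwmid ℓ h0 hlt (L + 2) (by omega), hwmid ℓ h0 hlt (L + 1) (by omega)]
          simp only [Nat.add_sub_cancel]
          have h1 := ih (ℓ + 1) hlt
          have h2 := ih (ℓ - 1) (by omega)
          calc (d ℓ - 1) * w (ℓ + 1) (L + 1) + w (ℓ - 1) (L + 1)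
              ≤ (d ℓ - 1) * (d 0 * w (ℓ + 1) L) + d 0 * w (ℓ - 1) L :=
                add_le_add (Nat.mul_le_mul_left _ h1) h2
            _ = d 0 * ((d ℓ - 1) * w (ℓ + 1) L + w (ℓ - 1) L) := by ring
  -- monotonicity in length
  have M : ∀ L, ∀ ℓ, ℓ ≤ h → w ℓ L ≤ w ℓ (L + 1) := by
    intro L
    induction L with
    | zero =>
      intro ℓ hℓ
      rw [hw0]
      rcases eq_or_lt_of_le hℓ with heq | hlt
      · subst heq
        rw [hwleaf 1 le_rfl]
        simp [hw0]
      · rcases Nat.eq_zero_or_pos ℓ with h0 | h0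
        · subst h0
          rw [hwroot 1 le_rfl]
          simp [hw0]
          omega
        · rw [hwmid ℓ h0 hlt 1 le_rfl]
          simp [hw0]
    | succ L ih =>
      intro ℓ hℓ
      rcases eq_or_lt_of_le hℓ with heq | hlt
      · subst heq
        rw [hwleaf (L + 2) (by omega), hwleaf (L + 1) (by omega)]
        simp only [Nat.add_sub_cancel]
        exact ih (ℓ - 1) (by omega)
      · rcases Nat.eq_zero_or_pos ℓ with h0 | h0
        · subst h0
          rw [hwroot (L + 2) (by omega), hwroot (L + 1) (by omega)]
          simp only [Nat.add_sub_cancel]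
          exact Nat.mul_le_mul_left _ (ih 1 (by omega))
        · rw [hwmid ℓ h0 hlt (L + 2) (by omega), hwmid ℓ h0 hlt (L + 1) (by omega)]
          simp only [Nat.add_sub_cancel]
          exact add_le_add (Nat.mul_le_mul_left _ (ih (ℓ + 1) hlt)) (ih (ℓ - 1) (by omega))
  -- main claim by strong induction on L
  intro L
  induction L using Nat.strong_induction_on with
  | _ L ih =>
    intro ℓ hℓ
    rcases L with _ | L
    · simp [hw0]
    · rcases Nat.eq_zero_or_pos ℓ with h0 | h0
      · subst h0
        by_cases hone : h = 1
        · -- leaf is at depth 1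
          subst hone
          rw [hwleaf (L + 1) (by omega), hwroot (L + 1) (by omega)]
          simp only [Nat.add_sub_cancel]
          rcases L with _ | L'
          · simp [hw0]
            omega
          · rw [hwroot (L' + 1) (by omega)]
            simp only [Nat.add_sub_cancel]
            exact Nat.mul_le_mul_left _ (M L' 1 (by omega))
        · have h2 : 2 ≤ h := by omega
          rw [hwroot (L + 1) (by omega), hwmid 1 le_rfl (by omega) (L + 1) (by omega)]
          simp only [Nat.add_sub_cancel]
          rcases L with _ | L'
          · simp [hw0]
            have h3 := hd1 1 (by omega)
            have h4 := hdmono 0 1 (by omega) (by omega)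
            omega
          · rw [hwmid 1 le_rfl (by omega) (L' + 1) (by omega), hwroot (L' + 1) (by omega)]
            simp only [Nat.add_sub_cancel]
            have hT := T L' 2 h2
            have hIH := ih L' (by omega) 0 (by omega)
            calc (d 1 - 1) * w 2 (L' + 1) + d 0 * w 1 L'
                ≤ (d 1 - 1) * (d 0 * w 2 L') + d 0 * w 0 L' :=
                  add_le_add (Nat.mul_le_mul_left _ hT) (Nat.mul_le_mul_left _ hIH)
              _ = d 0 * ((d 1 - 1) * w 2 L' + w 0 L') := by ring
      · by_cases hlast : ℓ + 1 = h
        · rw [hwmid ℓ h0 hℓ (L + 1) (by omega), hlast, hwleaf (L + 1) (by omega), ← hlast]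
          simp only [Nat.add_sub_cancel]
          have hih := ih L (by omega) (ℓ - 1) (by omega)
          rw [show ℓ - 1 + 1 = ℓ by omega] at hih
          exact le_trans hih (Nat.le_add_left _ _)
        · have hlt2 : ℓ + 1 < h := by omega
          rw [hwmid (ℓ + 1) (by omega) hlt2 (L + 1) (by omega),
            hwmid ℓ h0 hℓ (L + 1) (by omega)]
          simp only [Nat.add_sub_cancel]
          have h1 := ih L (by omega) (ℓ + 1) hlt2
          have h2 := ih L (by omega) (ℓ - 1) (by omega)
          rw [show ℓ - 1 + 1 = ℓ by omega] at h2
          have hd := hdmono ℓ (ℓ + 1) (by omega) hlt2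
          exact add_le_add (Nat.mul_le_mul (by omega) h1) h2
end

section
/- In a regular monotone hierarchy with root degree d(0) and level degrees d(ℓ) weakly decreasing, for all depths ℓ ≥ 1 and all walk lengths L: d(0)·w_ℓ(L) ≥ (d(ℓ)−1)·w_{ℓ+1}(L) + w_{ℓ−1}(L), where w_ℓ(L) is the number of walks of length L emanating from a node at depth ℓ. -/
/-- In a regular monotone hierarchy of height `h` with weakly decreasing level degrees
`d`, the walk counts satisfy `d(0)·w_ℓ(L) ≥ (d(ℓ)−1)·w_{ℓ+1}(L) + w_{ℓ−1}(L)` for all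
depths `1 ≤ ℓ < h` and all walk lengths `L`. -/
theorem stmt_14 (h : ℕ) (hh : 1 ≤ h) (d : ℕ → ℕ)
    (hd1 : ∀ ℓ < h, 1 ≤ d ℓ)
    (hdmono : ∀ k ℓ, k ≤ ℓ → ℓ < h → d ℓ ≤ d k)
    (w : ℕ → ℕ → ℕ)
    (hw0 : ∀ ℓ, w ℓ 0 = 1)
    (hwroot : ∀ L, 1 ≤ L → w 0 L = d 0 * w 1 (L - 1))
    (hwmid : ∀ ℓ, 1 ≤ ℓ → ℓ < h → ∀ L, 1 ≤ L →
      w ℓ L = (d ℓ - 1) * w (ℓ + 1) (L - 1) + w (ℓ - 1) (L - 1))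
    (hwleaf : ∀ L, 1 ≤ L → w h L = w (h - 1) (L - 1)) :
    ∀ L : ℕ, ∀ ℓ, 1 ≤ ℓ → ℓ < h →
      (d ℓ - 1) * w (ℓ + 1) L + w (ℓ - 1) L ≤ d 0 * w ℓ L := by
  have hd0 : 1 ≤ d 0 := hd1 0 hh
  have key : ∀ L, (∀ ℓ, 1 ≤ ℓ → ℓ < h →
      (d ℓ - 1) * w (ℓ + 1) L + w (ℓ - 1) L ≤ d 0 * w ℓ L) ∧
      w 1 L ≤ w 0 L ∧ w (h - 1) L ≤ d 0 * w h L := by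
    intro L
    induction L with
    | zero =>
      refine ⟨?_, ?_, ?_⟩
      · intro ℓ h1 h2
        have hm := hdmono 0 ℓ (Nat.zero_le _) h2
        have h1d := hd1 ℓ h2
        simp only [hw0]
        omega
      · simp [hw0]
      · simp only [hw0]
        omega
    | succ L ih =>
      obtain ⟨ihm, ih01, ihh⟩ := ih
      have hmain : ∀ ℓ, 1 ≤ ℓ → ℓ < h →
          (d ℓ - 1) * w (ℓ + 1) (L + 1) + w (ℓ - 1) (L + 1) ≤ d 0 * w ℓ (L + 1) := by
        intro ℓ h1 h2
        have hrec : w ℓ (L + 1) = (d ℓ - 1) * w (ℓ + 1) L + w (ℓ - 1) L := by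
          simpa using hwmid ℓ h1 h2 (L + 1) (by omega)
        have hA : (d ℓ - 1) * w (ℓ + 1) (L + 1) ≤ d 0 * ((d ℓ - 1) * w (ℓ + 1) L) := by
          rcases eq_or_lt_of_le (show ℓ + 1 ≤ h by omega) with heq | hlt
          · have e1 : w (ℓ + 1) (L + 1) = w (h - 1) L := by
              rw [heq]; simpa using hwleaf (L + 1) (by omega)
            have e2 : w (ℓ + 1) L = w h L := by rw [heq]
            rw [e1, e2]
            calc (d ℓ - 1) * w (h - 1) L ≤ (d ℓ - 1) * (d 0 * w h L) :=
                  Nat.mul_le_mul_left _ ihh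
              _ = d 0 * ((d ℓ - 1) * w h L) := by ring
          · have e1 : w (ℓ + 1) (L + 1)
                = (d (ℓ + 1) - 1) * w (ℓ + 1 + 1) L + w (ℓ + 1 - 1) L := by
              simpa using hwmid (ℓ + 1) (by omega) hlt (L + 1) (by omega)
            rw [e1]
            calc (d ℓ - 1) * ((d (ℓ + 1) - 1) * w (ℓ + 1 + 1) L + w (ℓ + 1 - 1) L)
                ≤ (d ℓ - 1) * (d 0 * w (ℓ + 1) L) :=
                  Nat.mul_le_mul_left _ (ihm (ℓ + 1) (by omega) hlt)
              _ = d 0 * ((d ℓ - 1) * w (ℓ + 1) L) := by ring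
        have hB : w (ℓ - 1) (L + 1) ≤ d 0 * w (ℓ - 1) L := by
          rcases Nat.eq_or_lt_of_le h1 with h1' | h1'
          · have hℓ : ℓ = 1 := h1'.symm
            subst hℓ
            simp only [Nat.sub_self]
            rw [show w 0 (L + 1) = d 0 * w 1 L by simpa using hwroot (L + 1) (by omega)]
            exact Nat.mul_le_mul_left _ ih01
          · have e1 : w (ℓ - 1) (L + 1)
                = (d (ℓ - 1) - 1) * w (ℓ - 1 + 1) L + w (ℓ - 1 - 1) L := by
              simpa using hwmid (ℓ - 1) (by omega) (by omega) (L + 1) (by omega)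
            rw [e1]
            exact ihm (ℓ - 1) (by omega) (by omega)
        rw [hrec, Nat.mul_add]
        exact Nat.add_le_add hA hB
      refine ⟨hmain, ?_, ?_⟩
      · rcases Nat.eq_or_lt_of_le hh with hh1 | hh1
        · -- h = 1
          have e1 : w 1 (L + 1) = w 0 L := by
            have t := hwleaf (L + 1) (by omega)
            rw [show h = 1 from hh1.symm] at t
            simpa using t
          have e2 : w 0 (L + 1) = d 0 * w 1 L := by
            simpa using hwroot (L + 1) (by omega)
          rw [e1, e2]
          have := ihh
          rw [show h - 1 = 0 by omega, show h = 1 by omega] at this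
          exact this
        · have e1 : w 1 (L + 1) = (d 1 - 1) * w 2 L + w 0 L := by
            simpa using hwmid 1 le_rfl hh1 (L + 1) (by omega)
          have e2 : w 0 (L + 1) = d 0 * w 1 L := by
            simpa using hwroot (L + 1) (by omega)
          rw [e1, e2]
          exact ihm 1 le_rfl hh1
      · have e2 : w h (L + 1) = w (h - 1) L := by
          simpa using hwleaf (L + 1) (by omega)
        rw [e2]
        rcases Nat.eq_or_lt_of_le hh with hh1 | hh1
        · -- h = 1
          rw [show h - 1 = 0 by omega]
          rw [show w 0 (L + 1) = d 0 * w 1 L by simpa using hwroot (L + 1) (by omega)]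
          exact Nat.mul_le_mul_left _ ih01
        · have e1 : w (h - 1) (L + 1)
              = (d (h - 1) - 1) * w (h - 1 + 1) L + w (h - 1 - 1) L := by
            simpa using hwmid (h - 1) (by omega) (by omega) (L + 1) (by omega)
          rw [e1, show h - 1 + 1 = h by omega]
          have := ihm (h - 1) (by omega) (by omega)
          rwa [show h - 1 + 1 = h by omega] at this
  intro L ℓ h1 h2
  exact (key L).1 ℓ h1 h2
end
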